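/- Consider the greedy peeling process on a finite weighted graph: starting from H₀ = V, repeatedly remove a vertex of minimum weighted degree until the set is empty, producing a sequence H₀ ⊋ H₁ ⊋ ⋯. Then max_i σ(H_i) ≥ σ(H*)/2, where H* is any subset maximizing σ. -/
import Mathlib


open Finset

/-- Total weight of (unordered) pairs inside `H`, for a symmetric pair-weight `w`. -/
noncomputable def totalWeight {V : Type*} [DecidableEq V] (w : V → V → ℝ) (H : Finset V) : ℝ :=
  (∑ u ∈ H, ∑ v ∈ H \ {u}, w u v) / 2

/-- Weighted degree of `v` within `H`. -/
noncomputable def degW {V : Type*} [DecidableEq V] (w : V → V → ℝ) (v : V) (H : Finset V) : ℝ :=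
  ∑ u ∈ H \ {v}, w v u

/-- Average weight σ(H) = w(H)/|H|. -/
noncomputable def avgW {V : Type*} [DecidableEq V] (w : V → V → ℝ) (H : Finset V) : ℝ :=
  totalWeight w H / H.card

lemma sum_degW {V : Type*} [DecidableEq V] (w : V → V → ℝ) (H : Finset V) :
    ∑ u ∈ H, degW w u H = 2 * totalWeight w H := by
  simp only [degW, totalWeight]
  ring

lemma totalWeight_erase {V : Type*} [DecidableEq V] (w : V → V → ℝ)
    (hsymm : ∀ u v, w u v = w v u) {H : Finset V} {u : V} (hu : u ∈ H) :
    totalWeight w H = totalWeight w (H.erase u) + degW w u H := by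
  simp only [totalWeight, degW, sdiff_singleton_eq_erase]
  have h1 : ∑ a ∈ H, ∑ b ∈ H.erase a, w a b
      = (∑ b ∈ H.erase u, w u b) + ∑ a ∈ H.erase u, ∑ b ∈ H.erase a, w a b := by
    rw [← Finset.add_sum_erase _ _ hu]
  have h2 : ∀ a ∈ H.erase u, ∑ b ∈ H.erase a, w a b
      = w a u + ∑ b ∈ (H.erase u).erase a, w a b := by
    intro a ha
    have hau : a ≠ u := Finset.ne_of_mem_erase ha
    have huH : u ∈ H.erase a := Finset.mem_erase.mpr ⟨hau.symm, hu⟩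
    rw [← Finset.add_sum_erase _ _ huH, Finset.erase_right_comm]
  rw [h1, Finset.sum_congr rfl h2, Finset.sum_add_distrib]
  have h3 : ∑ a ∈ H.erase u, w a u = ∑ a ∈ H.erase u, w u a := by
    exact Finset.sum_congr rfl (fun a _ => hsymm a u)
  rw [h3]
  ring

lemma degW_ge_avg {V : Type*} [DecidableEq V] (w : V → V → ℝ)
    (hsymm : ∀ u v, w u v = w v u)
    {Hstar : Finset V} (hne : Hstar.Nonempty)
    (hopt : ∀ H : Finset V, H.Nonempty → avgW w H ≤ avgW w Hstar)
    {u : V} (hu : u ∈ Hstar) : avgW w Hstar ≤ degW w u Hstar := by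
  rcases Finset.eq_empty_or_nonempty (Hstar.erase u) with he | he
  · -- Hstar = {u}
    have hH : Hstar = {u} := by
      apply Finset.eq_singleton_iff_unique_mem.mpr
      refine ⟨hu, fun x hx => ?_⟩
      by_contra hxu
      exact absurd (Finset.mem_erase.mpr ⟨hxu, hx⟩) (by simp [he])
    subst hH
    simp [avgW, totalWeight, degW]
  · have key := hopt _ he
    have hT := totalWeight_erase w hsymm hu
    have hn : (1:ℕ) ≤ Hstar.card := hne.card_pos
    have hcard : ((Hstar.erase u).card : ℝ) = (Hstar.card : ℝ) - 1 := by
      rw [Finset.card_erase_of_mem hu]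
      push_cast [hn]
      ring
    have hn2 : (2:ℕ) ≤ Hstar.card := by
      have := Finset.card_pos.mpr he
      rw [Finset.card_erase_of_mem hu] at this
      omega
    set n : ℝ := (Hstar.card : ℝ) with hndef
    have hnpos : (0:ℝ) < n := by positivity
    have hn1pos : (0:ℝ) < n - 1 := by
      have : (2:ℝ) ≤ n := by rw [hndef]; exact_mod_cast hn2
      linarith
    simp only [avgW] at key ⊢
    rw [hcard] at key
    rw [div_le_div_iff₀ hn1pos hnpos] at key
    rw [hT] at key
    rw [div_le_iff₀ hnpos]
    nlinarith [key]

lemma card_peel {V : Type*} [Fintype V] [DecidableEq V] (w : V → V → ℝ)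
    (f : ℕ → Finset V) (hf0 : f 0 = Finset.univ)
    (hstep : ∀ i, (f i).Nonempty →
      ∃ v ∈ f i, (∀ u ∈ f i, degW w v (f i) ≤ degW w u (f i)) ∧ f (i + 1) = (f i).erase v)
    {Hstar : Finset V} (hne : Hstar.Nonempty) :
    ∃ k, ¬ Hstar ⊆ f k := by
  by_contra hall
  push_neg at hall
  have key : ∀ i, (f i).card + i ≤ Fintype.card V := by
    intro i
    induction i with
    | zero => simp [hf0]
    | succ n ih =>
      have hne' : (f n).Nonempty := hne.mono (hall n)
      obtain ⟨v, hv, _, hfe⟩ := hstep n hne'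
      rw [hfe, Finset.card_erase_of_mem hv]
      have h1 : 1 ≤ (f n).card := Finset.card_pos.mpr hne'
      omega
  have := key (Fintype.card V)
  have h1 : 1 ≤ (f (Fintype.card V)).card :=
    Finset.card_pos.mpr (hne.mono (hall _))
  omega

theorem stmt_3 {V : Type*} [Fintype V] [DecidableEq V] (w : V → V → ℝ)
    (hsymm : ∀ u v, w u v = w v u) (hnn : ∀ u v, 0 ≤ w u v)
    (f : ℕ → Finset V) (hf0 : f 0 = Finset.univ)
    (hstep : ∀ i, (f i).Nonempty →
      ∃ v ∈ f i, (∀ u ∈ f i, degW w v (f i) ≤ degW w u (f i)) ∧ f (i + 1) = (f i).erase v)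
    (Hstar : Finset V) (hne : Hstar.Nonempty)
    (hopt : ∀ H : Finset V, H.Nonempty → avgW w H ≤ avgW w Hstar) :
    ∃ i, avgW w (f i) ≥ avgW w Hstar / 2 := by
  obtain ⟨k, hk⟩ := card_peel w f hf0 hstep hne
  have hex : ∃ k, ¬ Hstar ⊆ f k := ⟨k, hk⟩
  classical
  let N := Nat.find hex
  have hN : ¬ Hstar ⊆ f N := Nat.find_spec hex
  have hNpos : 0 < N := by
    rcases Nat.eq_zero_or_pos N with h0 | h
    · exfalso; apply hN; rw [h0, hf0]; exact Finset.subset_univ _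
    · exact h
  obtain ⟨i, hi⟩ : ∃ i, N = i + 1 := ⟨N - 1, by omega⟩
  have hsub : Hstar ⊆ f i := by
    by_contra h
    have h2 : N ≤ i := Nat.find_le h
    omega
  have hfne : (f i).Nonempty := hne.mono hsub
  obtain ⟨v, hv, hmin, hfe⟩ := hstep i hfne
  have hvH : v ∈ Hstar := by
    by_contra hvH
    apply hN
    rw [hi, hfe]
    intro x hx
    exact Finset.mem_erase.mpr ⟨fun he => hvH (he ▸ hx), hsub hx⟩
  refine ⟨i, ?_⟩
  -- deg v within f i ≥ deg v within Hstar ≥ σ*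
  have hdmono : degW w v Hstar ≤ degW w v (f i) := by
    apply Finset.sum_le_sum_of_subset_of_nonneg
    · exact fun x hx => by
        simp only [Finset.mem_sdiff, Finset.mem_singleton] at hx ⊢
        exact ⟨hsub hx.1, hx.2⟩
    · exact fun x _ _ => hnn v x
  have hstar : avgW w Hstar ≤ degW w v Hstar := degW_ge_avg w hsymm hne hopt hvH
  have hsum : (f i).card * degW w v (f i) ≤ 2 * totalWeight w (f i) := by
    rw [← sum_degW]
    calc ((f i).card : ℝ) * degW w v (f i) = ∑ _u ∈ f i, degW w v (f i) := by
          rw [Finset.sum_const, nsmul_eq_mul]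
      _ ≤ ∑ u ∈ f i, degW w u (f i) := Finset.sum_le_sum (fun u hu => hmin u hu)
  have hcpos : (0:ℝ) < (f i).card := by exact_mod_cast Finset.card_pos.mpr hfne
  have : ((f i).card : ℝ) * avgW w Hstar ≤ 2 * totalWeight w (f i) := by
    calc ((f i).card : ℝ) * avgW w Hstar ≤ ((f i).card : ℝ) * degW w v (f i) := by
          apply mul_le_mul_of_nonneg_left (le_trans hstar hdmono) (le_of_lt hcpos)
      _ ≤ 2 * totalWeight w (f i) := hsum
  rw [ge_iff_le, show avgW w (f i) = totalWeight w (f i) / ((f i).card : ℝ) from rfl,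
    le_div_iff₀ hcpos]
  linarith
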